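/- Let X, Y be coinfinite primitive recursive subsets of ℕ with 0 ∈ X ∩ Y, and define Z₁ by: 0 ∈ Z₁ and s+1 ∉ Z₁ iff min(#(0^X)[s+1], #(0^Y)[s+1]) > min(#(0^X)[s], #(0^Y)[s]). Then R_{Z₁} is the greatest lower bound of R_X and R_Y under ≤_pr: R_{Z₁} ≤_pr R_X, R_{Z₁} ≤_pr R_Y, and for any coinfinite primitive recursive V with R_V ≤_pr R_X and R_V ≤_pr R_Y, one has R_V ≤_pr R_{Z₁}. -/

import Mathlib

/-- The equivalence relation `R_X`: `x R_X y` iff both in `X` or `x = y`. -/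
def REq (X : Set ℕ) (x y : ℕ) : Prop := (x ∈ X ∧ y ∈ X) ∨ x = y

/-- Primitive recursive reducibility between binary relations on ℕ. -/
def PrRed (R S : ℕ → ℕ → Prop) : Prop :=
  ∃ f : ℕ → ℕ, Primrec f ∧ ∀ x y, R x y ↔ S (f x) (f y)

/-- pr-bireducibility. -/
def PrEquiv (R S : ℕ → ℕ → Prop) : Prop := PrRed R S ∧ PrRed S R

/-- `X` is a primitive recursive set. -/
def PRSet (X : Set ℕ) : Prop :=
  ∃ f : ℕ → Bool, Primrec f ∧ ∀ n, n ∈ X ↔ f n = true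

/-- `#(0^X)[s]`: the number of elements of the complement of `X` that are `≤ s`. -/
noncomputable def zc (X : Set ℕ) (s : ℕ) : ℕ := {k | k ≤ s ∧ k ∉ X}.ncard

/-!
A reduction `f` of `R_A` to `R_B` sends pairwise `R_A`-inequivalent numbers to pairwise
`R_B`-inequivalent ones, and among pairwise `R_B`-inequivalent numbers `≤ m` at most one lies
in `B`. Applied to `Aᶜ ∩ [0, s]` plus one extra point, this gives `#(0^A)[s] ≤ #(0^B)[h s]`
with `h s` the maximum of `f` on `[0, s + c]`. Conversely, such an `h` yields a reduction
sending `A` to `0 ∈ B` and the `n`-th element of `Aᶜ` to the `n`-th element of `Bᶜ`, which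
bounded search finds below `h`. The definition of `Z₁` makes
`#(0^{Z₁}) = min (#(0^X)) (#(0^Y))`, so this criterion shows that `R_{Z₁}` is the greatest
lower bound.
-/

open Classical in
theorem zc_eq_count (X : Set ℕ) (s : ℕ) : zc X s = Nat.count (· ∉ X) (s + 1) := by
  rw [Nat.count_eq_card_filter_range, zc, ← Set.ncard_coe_finset]
  congr 1
  ext k
  simp

theorem zc_zero_of_mem {X : Set ℕ} (h : 0 ∈ X) : zc X 0 = 0 := by
  classical
  simp [zc_eq_count, Nat.count_one, h]

theorem zc_zero_of_notMem {X : Set ℕ} (h : 0 ∉ X) : zc X 0 = 1 := by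
  classical
  simp [zc_eq_count, Nat.count_one, h]

theorem zc_succ_of_mem {X : Set ℕ} {s : ℕ} (h : s + 1 ∈ X) : zc X (s + 1) = zc X s := by
  classical
  simp [zc_eq_count, Nat.count_succ _ (s + 1), h]

theorem zc_succ_of_notMem {X : Set ℕ} {s : ℕ} (h : s + 1 ∉ X) :
    zc X (s + 1) = zc X s + 1 := by
  classical
  simp [zc_eq_count, Nat.count_succ _ (s + 1), h]

theorem zc_succ_le (X : Set ℕ) (s : ℕ) : zc X (s + 1) ≤ zc X s + 1 := by
  by_cases h : s + 1 ∈ X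
  · simp [zc_succ_of_mem h]
  · simp [zc_succ_of_notMem h]

theorem zc_monotone (X : Set ℕ) : Monotone (zc X) := by
  classical
  intro a b hab
  simpa only [zc_eq_count] using Nat.count_monotone _ (Nat.succ_le_succ hab)

open Classical in
theorem zc_eq_count_add_one_of_notMem {X : Set ℕ} {s : ℕ} (h : s ∉ X) :
    zc X s = Nat.count (· ∉ X) s + 1 := by
  rw [zc_eq_count, Nat.count_succ, if_pos h]

theorem one_le_zc_of_notMem {X : Set ℕ} {s : ℕ} (h : s ∉ X) : 1 ≤ zc X s := by
  classical
  simp [zc_eq_count_add_one_of_notMem h]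

theorem injOn_zc (X : Set ℕ) : Set.InjOn (zc X) Xᶜ := by
  classical
  intro x hx y hy hxy
  rw [zc_eq_count_add_one_of_notMem hx, zc_eq_count_add_one_of_notMem hy] at hxy
  exact Nat.count_injective hx hy (Nat.add_right_cancel hxy)

theorem exists_notMem_zc_eq {X : Set ℕ} {n N : ℕ} (hn : 1 ≤ n) (hN : n ≤ zc X N) :
    ∃ y ≤ N, y ∉ X ∧ zc X y = n := by
  induction N with
  | zero =>
    by_cases h0 : 0 ∈ X
    · rw [zc_zero_of_mem h0] at hN
      omega
    · rw [zc_zero_of_notMem h0] at hN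
      exact ⟨0, le_rfl, h0, by rw [zc_zero_of_notMem h0]; omega⟩
  | succ N ih =>
    by_cases hle : n ≤ zc X N
    · obtain ⟨y, hyN, hy⟩ := ih hle
      exact ⟨y, hyN.trans N.le_succ, hy⟩
    · have hmem : N + 1 ∉ X := fun h => hle (zc_succ_of_mem h ▸ hN)
      exact ⟨N + 1, le_rfl, hmem, by have := zc_succ_of_notMem hmem; omega⟩

theorem Primrec.nat_count {p : ℕ → Prop} [DecidablePred p] (hp : PrimrecPred p) :
    Primrec (Nat.count p) :=
  (Primrec.list_length.comp ((Primrec.listFilter hp).comp Primrec.list_range)).of_eq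
    fun n => by simp [Nat.count, List.countP_eq_length_filter]

theorem Primrec.zc {X : Set ℕ} (hX : PrimrecPred (· ∈ X)) : Primrec (zc X) := by
  classical
  exact ((Primrec.nat_count hX.not).comp Primrec.succ).of_eq fun s => (zc_eq_count X s).symm

theorem Primrec.finset_sup_range {f : ℕ → ℕ} (hf : Primrec f) :
    Primrec fun n => (Finset.range n).sup f :=
  (Primrec.nat_rec₁ (f := fun n m => max (f n) m) 0
      (Primrec.nat_max.comp (hf.comp Primrec.fst) Primrec.snd)).of_eq
    fun n => by
      induction n with
      | zero => rfl
      | succ n ih => simp [Finset.range_add_one, ih]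

theorem prSet_iff_primrecPred {X : Set ℕ} : PRSet X ↔ PrimrecPred (· ∈ X) := by
  classical
  constructor
  · rintro ⟨f, hf, hX⟩
    exact Primrec.primrecPred (hf.of_eq fun n => by simp [hX])
  · intro hX
    exact ⟨fun n => decide (n ∈ X), hX.decide, fun n => by simp⟩

theorem rEq_iff_of_mapsTo {A B : Set ℕ} {g : ℕ → ℕ} (hA : Set.MapsTo g A B)
    (hAc : Set.MapsTo g Aᶜ Bᶜ) (hinj : Set.InjOn g Aᶜ) (x y : ℕ) :
    REq A x y ↔ REq B (g x) (g y) := by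
  by_cases hx : x ∈ A <;> by_cases hy : y ∈ A
  · simp [REq, hx, hy, hA hx, hA hy]
  · have hgy : g y ∉ B := hAc hy
    have hxy : x ≠ y := fun h => hy (h ▸ hx)
    have hgxy : g x ≠ g y := fun h => hgy (h ▸ hA hx)
    simp [REq, hy, hgy, hxy, hgxy]
  · have hgx : g x ∉ B := hAc hx
    have hxy : x ≠ y := fun h => hx (h ▸ hy)
    have hgxy : g x ≠ g y := fun h => hgx (h ▸ hA hy)
    simp [REq, hx, hgx, hxy, hgxy]
  · have hgx : g x ∉ B := hAc hx
    simp [REq, hx, hgx, hinj.eq_iff hx hy]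

theorem pairwise_not_rEq_of_forall_notMem_or_eq {A : Set ℕ} {F : Set ℕ} (v : ℕ)
    (hF : ∀ x ∈ F, x ∉ A ∨ x = v) : F.Pairwise fun x y => ¬ REq A x y := by
  rintro x hx y hy hxy (⟨hxA, hyA⟩ | rfl)
  · obtain rfl := (hF x hx).resolve_left (not_not.2 hxA)
    exact hxy ((hF y hy).resolve_left (not_not.2 hyA)).symm
  · exact hxy rfl

theorem Set.Pairwise.injOn_of_not_rEq {B S : Set ℕ} {f : ℕ → ℕ}
    (h : S.Pairwise fun x y => ¬ REq B (f x) (f y)) : S.InjOn f :=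
  fun _ hx _ hy hxy => by_contra fun hne => h hx hy hne (Or.inr hxy)

theorem card_le_zc_add_one_of_pairwise {B : Set ℕ} {F : Finset ℕ} {m : ℕ}
    (hFm : ∀ x ∈ F, x ≤ m) (hF : (F : Set ℕ).Pairwise fun x y => ¬ REq B x y) :
    F.card ≤ zc B m + 1 := by
  classical
  have hin : (F.filter (· ∈ B)).card ≤ 1 :=
    Finset.card_le_one.2 fun x hx y hy => by_contra fun hxy =>
      hF (Finset.mem_filter.1 hx).1 (Finset.mem_filter.1 hy).1 hxy
        (Or.inl ⟨(Finset.mem_filter.1 hx).2, (Finset.mem_filter.1 hy).2⟩)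
  have hout : (F.filter (· ∉ B)).card ≤ zc B m := by
    rw [zc_eq_count, Nat.count_eq_card_filter_range]
    refine Finset.card_le_card fun x hx => ?_
    rw [Finset.mem_filter] at hx ⊢
    exact ⟨Finset.mem_range.2 (Nat.lt_succ_of_le (hFm x hx.1)), hx.2⟩
  have := Finset.card_filter_add_card_filter_not (s := F) (p := (· ∈ B))
  omega

theorem exists_pairwise_zc_add_one_le_card (A : Set ℕ) : ∃ c, ∀ s, ∃ F : Finset ℕ,
    (∀ x ∈ F, x ≤ s + c) ∧ (F : Set ℕ).Pairwise (fun x y => ¬ REq A x y) ∧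
      zc A s + 1 ≤ F.card := by
  classical
  by_cases hA : ∃ v, v ∈ A
  · obtain ⟨v, hv⟩ := hA
    refine ⟨v, fun s => ⟨insert v ((Finset.range (s + 1)).filter (· ∉ A)), ?_, ?_, ?_⟩⟩
    · simp only [Finset.mem_insert, Finset.mem_filter, Finset.mem_range]
      omega
    · refine pairwise_not_rEq_of_forall_notMem_or_eq v fun x hx => ?_
      simp only [Finset.coe_insert, Set.mem_insert_iff, Finset.coe_filter] at hx
      exact hx.elim Or.inr fun hx => Or.inl hx.2
    · rw [Finset.card_insert_of_notMem (by simp [hv]), zc_eq_count,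
        Nat.count_eq_card_filter_range]
  · simp only [not_exists] at hA
    refine ⟨1, fun s => ⟨Finset.range (s + 2), ?_, ?_, ?_⟩⟩
    · simp only [Finset.mem_range]
      omega
    · exact pairwise_not_rEq_of_forall_notMem_or_eq 0 fun x _ => Or.inl (hA x)
    · rw [zc_eq_count, Nat.count_iff_forall.2 fun n _ => hA n, Finset.card_range]

theorem prRed_rEq_of_zc_le {A B : Set ℕ} (hA : PrimrecPred (· ∈ A))
    (hB : PrimrecPred (· ∈ B)) (hB0 : 0 ∈ B) {h : ℕ → ℕ} (hh : Primrec h)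
    (hAB : ∀ s, zc A s ≤ zc B (h s)) :
    PrRed (REq A) (REq B) := by
  classical
  -- `g x` is the element of `Bᶜ` of the same rank as `x` in `Aᶜ`; for `x ∈ A` the search
  -- fails and `Nat.findGreatest` returns its default `0 ∈ B`.
  let P : ℕ → ℕ → Prop := fun x y => x ∉ A ∧ y ∉ B ∧ zc B y = zc A x
  let g : ℕ → ℕ := fun x => Nat.findGreatest (P x) (h x)
  have hP : PrimrecRel P :=
    (hA.not.comp Primrec.fst).and ((hB.not.comp Primrec.snd).and
      (Primrec.eq.comp ((Primrec.zc hB).comp Primrec.snd) ((Primrec.zc hA).comp Primrec.fst)))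
  have hgP : ∀ x ∉ A, P x (g x) := fun x hx => by
    obtain ⟨y, hyh, hyB, hy⟩ := exists_notMem_zc_eq (one_le_zc_of_notMem hx) (hAB x)
    exact Nat.findGreatest_spec hyh ⟨hx, hyB, hy⟩
  refine ⟨g, Primrec.nat_findGreatest hh hP, rEq_iff_of_mapsTo ?_ ?_ ?_⟩
  · intro x hx
    have hgx : g x = 0 := Nat.findGreatest_eq_zero_iff.2 fun _ _ _ hPx => hPx.1 hx
    rwa [hgx]
  · exact fun x hx => (hgP x hx).2.1
  · intro x hx y hy hxy
    apply injOn_zc A hx hy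
    rw [← (hgP x hx).2.2, ← (hgP y hy).2.2, hxy]

theorem exists_zc_le_of_prRed_rEq {A B : Set ℕ} (hAB : PrRed (REq A) (REq B)) :
    ∃ h : ℕ → ℕ, Primrec h ∧ ∀ s, zc A s ≤ zc B (h s) := by
  obtain ⟨f, hf, hred⟩ := hAB
  obtain ⟨c, hc⟩ := exists_pairwise_zc_add_one_le_card A
  refine ⟨fun s => (Finset.range (s + c + 1)).sup f,
    (Primrec.finset_sup_range hf).comp (Primrec.succ.comp (Primrec.nat_add.comp .id (.const c))),
    fun s => ?_⟩
  dsimp only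
  obtain ⟨F, hFs, hF, hcard⟩ := hc s
  have hfF : (F : Set ℕ).Pairwise fun x y => ¬ REq B (f x) (f y) :=
    hF.imp fun _ _ => (hred _ _).not.1
  have hinj := hfF.injOn_of_not_rEq
  have hle := card_le_zc_add_one_of_pairwise (F := F.image f)
    (m := (Finset.range (s + c + 1)).sup f)
    (fun y hy => by
      obtain ⟨x, hx, rfl⟩ := Finset.mem_image.1 hy
      exact Finset.le_sup (Finset.mem_range.2 (Nat.lt_succ_of_le (hFs x hx))))
    (by rw [Finset.coe_image, hinj.pairwise_image]; exact hfF)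
  rw [Finset.card_image_of_injOn hinj] at hle
  omega

theorem prRed_rEq_iff_exists_zc_le {A B : Set ℕ} (hA : PrimrecPred (· ∈ A))
    (hB : PrimrecPred (· ∈ B)) (hB0 : 0 ∈ B) :
    PrRed (REq A) (REq B) ↔ ∃ h : ℕ → ℕ, Primrec h ∧ ∀ s, zc A s ≤ zc B (h s) :=
  ⟨exists_zc_le_of_prRed_rEq, fun ⟨_, hh, hAB⟩ => prRed_rEq_of_zc_le hA hB hB0 hh hAB⟩

section Meet

variable {X Y Z : Set ℕ}

theorem zc_eq_min (hX0 : 0 ∈ X) (hY0 : 0 ∈ Y) (hZ0 : 0 ∈ Z)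
    (hZ : ∀ s, (s + 1 ∉ Z ↔ min (zc X (s+1)) (zc Y (s+1)) > min (zc X s) (zc Y s)))
    (s : ℕ) :
    zc Z s = min (zc X s) (zc Y s) := by
  induction s with
  | zero => rw [zc_zero_of_mem hX0, zc_zero_of_mem hY0, zc_zero_of_mem hZ0, min_self]
  | succ s ih =>
    have := zc_succ_le X s
    have := zc_succ_le Y s
    have := zc_monotone X (Nat.le_add_right s 1)
    have := zc_monotone Y (Nat.le_add_right s 1)
    by_cases hs : s + 1 ∈ Z
    · rw [zc_succ_of_mem hs, ih]
      have := (hZ s).not.1 (not_not.2 hs)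
      omega
    · rw [zc_succ_of_notMem hs, ih]
      have := (hZ s).1 hs
      omega

theorem primrecPred_mem_of_zc (hX : PrimrecPred (· ∈ X)) (hY : PrimrecPred (· ∈ Y))
    (hZ0 : 0 ∈ Z)
    (hZ : ∀ s, (s + 1 ∉ Z ↔ min (zc X (s+1)) (zc Y (s+1)) > min (zc X s) (zc Y s))) :
    PrimrecPred (· ∈ Z) := by
  let m : ℕ → ℕ := fun s => min (zc X s) (zc Y s)
  have hm : Primrec m := Primrec.nat_min.comp (Primrec.zc hX) (Primrec.zc hY)
  refine (Primrec.nat_le.comp hm (hm.comp Primrec.pred)).of_eq fun z => ?_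
  cases z with
  | zero => simp [hZ0]
  | succ s =>
    change m (s + 1) ≤ m s ↔ s + 1 ∈ Z
    rw [← not_lt, ← gt_iff_lt, ← hZ s, not_not]

end Meet

theorem stmt_9_general (X Y Z₁ : Set ℕ) (hX : PRSet X) (hY : PRSet Y)
    (hX0 : 0 ∈ X) (hY0 : 0 ∈ Y)
    (hZ0 : 0 ∈ Z₁)
    (hZ : ∀ s, (s + 1 ∉ Z₁ ↔
      min (zc X (s+1)) (zc Y (s+1)) > min (zc X s) (zc Y s))) :
    PrRed (REq Z₁) (REq X) ∧ PrRed (REq Z₁) (REq Y) ∧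
      ∀ V : Set ℕ, PRSet V → Vᶜ.Infinite →
        PrRed (REq V) (REq X) → PrRed (REq V) (REq Y) →
          PrRed (REq V) (REq Z₁) := by
  rw [prSet_iff_primrecPred] at hX hY
  have hZ₁ := primrecPred_mem_of_zc hX hY hZ0 hZ
  have hmin := zc_eq_min hX0 hY0 hZ0 hZ
  refine ⟨(prRed_rEq_iff_exists_zc_le hZ₁ hX hX0).2
      ⟨id, .id, fun s => (hmin s).trans_le (min_le_left _ _)⟩,
    (prRed_rEq_iff_exists_zc_le hZ₁ hY hY0).2
      ⟨id, .id, fun s => (hmin s).trans_le (min_le_right _ _)⟩,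
    fun V hV _ hVX hVY => ?_⟩
  rw [prSet_iff_primrecPred] at hV
  obtain ⟨h₁, hh₁, hV₁⟩ := (prRed_rEq_iff_exists_zc_le hV hX hX0).1 hVX
  obtain ⟨h₂, hh₂, hV₂⟩ := (prRed_rEq_iff_exists_zc_le hV hY hY0).1 hVY
  refine (prRed_rEq_iff_exists_zc_le hV hZ₁ hZ0).2
    ⟨fun s => max (h₁ s) (h₂ s), Primrec.nat_max.comp hh₁ hh₂, fun s => ?_⟩
  rw [hmin]
  exact le_min ((hV₁ s).trans (zc_monotone X (le_max_left _ _)))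
    ((hV₂ s).trans (zc_monotone Y (le_max_right _ _)))

theorem stmt_9 (X Y Z₁ : Set ℕ) (hX : PRSet X) (hY : PRSet Y)
    (hXc : Xᶜ.Infinite) (hYc : Yᶜ.Infinite) (hX0 : 0 ∈ X) (hY0 : 0 ∈ Y)
    (hZ0 : 0 ∈ Z₁)
    (hZ : ∀ s, (s + 1 ∉ Z₁ ↔
      min (zc X (s+1)) (zc Y (s+1)) > min (zc X s) (zc Y s))) :
    PrRed (REq Z₁) (REq X) ∧ PrRed (REq Z₁) (REq Y) ∧
      ∀ V : Set ℕ, PRSet V → Vᶜ.Infinite →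
        PrRed (REq V) (REq X) → PrRed (REq V) (REq Y) →
          PrRed (REq V) (REq Z₁) :=
  stmt_9_general X Y Z₁ hX hY hX0 hY0 hZ0 hZ
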